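/- arXiv:1904.08543 — 2 statements merged into one kernel-verified Lean document; each statement's English description precedes it below -/
import Mathlib

section
/- Let q be a polynomial with q(closed unit disk) ⊂ open unit disk. Then for every compact set C contained in the open unit disk there is N such that for all n ≥ N, C ⊂ K(f_n), where f_n(z) = z^n + q(z). Combined with K(f_n) ⊂ {|z| < 1+ε} for large n, it follows that K(f_n) converges to the closed unit disk in the Hausdorff metric. -/
open Polynomial

/-- The filled Julia set of a map `f : ℂ → ℂ`: points with bounded orbit. -/
def filledJulia (f : ℂ → ℂ) : Set ℂ := {z | ∃ C : ℝ, ∀ m : ℕ, ‖f^[m] z‖ ≤ C}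

lemma exists_rho (q : Polynomial ℂ) (hq : ∀ z : ℂ, ‖z‖ ≤ 1 → ‖q.eval z‖ < 1) :
    ∃ ρ : ℝ, 0 ≤ ρ ∧ ρ < 1 ∧ ∀ z : ℂ, ‖z‖ ≤ 1 → ‖q.eval z‖ ≤ ρ := by
  obtain ⟨z₀, hz₀, hmax⟩ := (isCompact_closedBall (0:ℂ) 1).exists_isMaxOn
    ⟨0, by simp⟩ (q.continuous.norm.continuousOn)
  refine ⟨‖q.eval z₀‖, norm_nonneg _, hq z₀ (by simpa using hz₀), fun z hz => ?_⟩
  exact hmax (a := z) (by simpa using hz)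

/-- invariance of a ball: lower bound lemma -/
lemma ball_subset_filledJulia (q : Polynomial ℂ) {ρ s : ℝ}
    (hρ : ∀ z : ℂ, ‖z‖ ≤ 1 → ‖q.eval z‖ ≤ ρ) (hρs : ρ < s) (hs0 : 0 ≤ s) (hs1 : s < 1) :
    ∃ N : ℕ, ∀ n ≥ N, Metric.closedBall (0:ℂ) s ⊆
      filledJulia (fun z : ℂ => z ^ n + q.eval z) := by
  have hpow : Filter.Tendsto (fun n : ℕ => s ^ n) Filter.atTop (nhds 0) :=
    tendsto_pow_atTop_nhds_zero_of_lt_one hs0 hs1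
  have hev : ∀ᶠ n : ℕ in Filter.atTop, s ^ n ≤ s - ρ :=
    (hpow.eventually_lt_const (show (0:ℝ) < s - ρ by linarith)).mono fun n hn => hn.le
  obtain ⟨N, hN⟩ := Filter.eventually_atTop.1 hev
  refine ⟨N, fun n hn z hz => ?_⟩
  rw [Metric.mem_closedBall, dist_zero_right] at hz
  have step : ∀ w : ℂ, ‖w‖ ≤ s → ‖w ^ n + q.eval w‖ ≤ s := by
    intro w hw
    have h1 : ‖w ^ n‖ ≤ s ^ n := by
      rw [norm_pow]; exact pow_le_pow_left₀ (norm_nonneg _) hw n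
    have h2 : ‖q.eval w‖ ≤ ρ := hρ w (le_trans hw hs1.le)
    calc ‖w ^ n + q.eval w‖ ≤ ‖w ^ n‖ + ‖q.eval w‖ := norm_add_le _ _
      _ ≤ s ^ n + ρ := add_le_add h1 h2
      _ ≤ s := by have := hN n hn; linarith
  refine ⟨s, fun m => ?_⟩
  induction m with
  | zero => simpa using hz
  | succ m ih =>
      rw [Function.iterate_succ_apply']
      exact step _ ih

/-- polynomial growth bound outside the unit disk -/
lemma poly_bound (q : Polynomial ℂ) (z : ℂ) (hz : 1 ≤ ‖z‖) :
    ‖q.eval z‖ ≤ (∑ i ∈ Finset.range (q.natDegree + 1), ‖q.coeff i‖) * ‖z‖ ^ q.natDegree := by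
  rw [eval_eq_sum_range, Finset.sum_mul]
  refine (norm_sum_le _ _).trans (Finset.sum_le_sum fun i hi => ?_)
  rw [norm_mul, norm_pow]
  exact mul_le_mul_of_nonneg_left
    (pow_le_pow_right₀ hz (Nat.lt_succ_iff.1 (Finset.mem_range.1 hi))) (norm_nonneg _)

lemma filledJulia_subset (q : Polynomial ℂ) {δ : ℝ} (hδ : 0 < δ) :
    ∃ N : ℕ, ∀ n ≥ N, filledJulia (fun z : ℂ => z ^ n + q.eval z) ⊆
      Metric.closedBall (0:ℂ) (1 + δ) := by
  set M : ℝ := ∑ i ∈ Finset.range (q.natDegree + 1), ‖q.coeff i‖ with hM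
  have hM0 : 0 ≤ M := Finset.sum_nonneg fun i _ => norm_nonneg _
  set d := q.natDegree
  have h1δ : (1:ℝ) < 1 + δ := by linarith
  obtain ⟨k₀, hk₀⟩ := Filter.eventually_atTop.1
    ((tendsto_pow_atTop_atTop_of_one_lt h1δ).eventually_ge_atTop (M + 2))
  refine ⟨k₀ + d + 1, fun n hn z hz => ?_⟩
  rw [Metric.mem_closedBall, dist_zero_right]
  by_contra hgt
  push_neg at hgt
  -- key: for any w with 1 + δ ≤ ‖w‖, ‖f w‖ ≥ 2‖w‖
  have key : ∀ w : ℂ, 1 + δ ≤ ‖w‖ → 2 * ‖w‖ ≤ ‖w ^ n + q.eval w‖ := by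
    intro w hw
    have hw1 : 1 ≤ ‖w‖ := by linarith
    set R := ‖w‖
    have hRd : (1:ℝ) ≤ R ^ d := one_le_pow₀ hw1
    obtain ⟨k, hk⟩ : ∃ k, n = k + d + 1 := ⟨n - d - 1, by omega⟩
    have hkk₀ : k₀ ≤ k := by omega
    have hRk : M + 2 ≤ R ^ k :=
      le_trans (hk₀ k hkk₀) (pow_le_pow_left₀ (by linarith) hw k)
    have hpow : R ^ n = R ^ k * R ^ d * R := by rw [hk]; ring
    have hqb : ‖q.eval w‖ ≤ M * R ^ d := poly_bound q w hw1
    have h2 : R ^ n - M * R ^ d ≥ 2 * R := by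
      rw [hpow]
      have h3 : (M + 2) * (R ^ d * R) ≤ R ^ k * (R ^ d * R) :=
        mul_le_mul_of_nonneg_right hRk (by positivity)
      nlinarith [mul_le_mul_of_nonneg_left hRd (show (0:ℝ) ≤ M from hM0),
        mul_le_mul_of_nonneg_right hRd (show (0:ℝ) ≤ R by linarith)]
    calc 2 * R ≤ R ^ n - M * R ^ d := h2
      _ ≤ ‖w ^ n‖ - ‖q.eval w‖ := by rw [norm_pow]; linarith
      _ ≤ ‖w ^ n + q.eval w‖ := by
          have h4 : ‖w ^ n‖ = ‖(w ^ n + q.eval w) - q.eval w‖ := by ring_nf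
          rw [h4]
          have := norm_sub_le (w ^ n + q.eval w) (q.eval w)
          linarith
  -- orbit grows geometrically
  have grow : ∀ m : ℕ, 2 ^ m * ‖z‖ ≤ ‖(fun z : ℂ => z ^ n + q.eval z)^[m] z‖ := by
    intro m
    induction m with
    | zero => simp
    | succ m ih =>
        rw [Function.iterate_succ_apply']
        set w := (fun z : ℂ => z ^ n + q.eval z)^[m] z
        have hw : 1 + δ ≤ ‖w‖ := by
          have h1 : (1:ℝ) ≤ 2 ^ m := one_le_pow₀ (by norm_num)
          nlinarith [hgt.le, norm_nonneg z]
        calc (2:ℝ) ^ (m+1) * ‖z‖ = 2 * (2 ^ m * ‖z‖) := by ring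
          _ ≤ 2 * ‖w‖ := by linarith
          _ ≤ ‖w ^ n + q.eval w‖ := key w hw
  obtain ⟨C, hC⟩ := hz
  obtain ⟨m, hm⟩ := pow_unbounded_of_one_lt (C : ℝ) (show (1:ℝ) < 2 by norm_num)
  have h1 : 2 ^ m * ‖z‖ ≥ 2 ^ m * 1 :=
    mul_le_mul_of_nonneg_left (by linarith [hgt]) (by positivity)
  have := hC m
  have := grow m
  nlinarith

lemma part1 (q : Polynomial ℂ) (hq : ∀ z : ℂ, ‖z‖ ≤ 1 → ‖q.eval z‖ < 1) :
    ∀ C : Set ℂ, IsCompact C → C ⊆ Metric.ball (0 : ℂ) 1 →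
      ∃ N : ℕ, ∀ n ≥ N, C ⊆ filledJulia (fun z : ℂ => z ^ n + q.eval z) := by
  obtain ⟨ρ, hρ0, hρ1, hρ⟩ := exists_rho q hq
  intro C hC hCb
  rcases C.eq_empty_or_nonempty with h | h
  · exact ⟨0, fun n _ => by simp [h]⟩
  · obtain ⟨z₀, hz₀C, hmax⟩ := hC.exists_isMaxOn h continuous_norm.continuousOn
    have hr1 : ‖z₀‖ < 1 := by
      have := hCb hz₀C; rwa [Metric.mem_ball, dist_zero_right] at this
    set s : ℝ := max ‖z₀‖ ((1 + ρ) / 2) with hs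
    have hρs : ρ < s := lt_of_lt_of_le (by linarith) (le_max_right _ _)
    have hs0 : 0 ≤ s := le_trans (norm_nonneg _) (le_max_left _ _)
    have hs1 : s < 1 := max_lt hr1 (by linarith)
    obtain ⟨N, hN⟩ := ball_subset_filledJulia q hρ hρs hs0 hs1
    refine ⟨N, fun n hn => subset_trans ?_ (hN n hn)⟩
    intro z hz
    rw [Metric.mem_closedBall, dist_zero_right]
    exact le_trans (hmax hz) (le_max_left _ _)

/-- if `q` maps the closed unit disk into the open unit disk, then
every compact subset of the open unit disk is eventually contained in `K(f_n)`,
and `K(f_n)` converges to the closed unit disk in the Hausdorff metric. -/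
theorem filledJulia_tendsto_closed_disk (q : Polynomial ℂ)
    (hq : ∀ z : ℂ, ‖z‖ ≤ 1 → ‖q.eval z‖ < 1) :
    (∀ C : Set ℂ, IsCompact C → C ⊆ Metric.ball (0 : ℂ) 1 →
      ∃ N : ℕ, ∀ n ≥ N, C ⊆ filledJulia (fun z : ℂ => z ^ n + q.eval z)) ∧
    Filter.Tendsto
      (fun n : ℕ => Metric.hausdorffDist
        (filledJulia (fun z : ℂ => z ^ n + q.eval z))
        (Metric.closedBall (0 : ℂ) 1))
      Filter.atTop (nhds 0) := by
  refine ⟨part1 q hq, ?_⟩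
  rw [Metric.tendsto_atTop]
  intro ε hε
  set δ : ℝ := min (ε / 2) (1 / 2) with hδdef
  have hδ0 : 0 < δ := lt_min (by linarith) (by norm_num)
  have hδε : δ ≤ ε / 2 := min_le_left _ _
  have hδh : δ ≤ 1 / 2 := min_le_right _ _
  obtain ⟨N₁, hN₁⟩ := part1 q hq (Metric.closedBall 0 (1 - δ))
    (isCompact_closedBall _ _) (Metric.closedBall_subset_ball (by linarith))
  obtain ⟨N₂, hN₂⟩ := filledJulia_subset q hδ0
  refine ⟨max N₁ N₂, fun n hn => ?_⟩
  have hn₁ : n ≥ N₁ := le_trans (le_max_left _ _) hn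
  have hn₂ : n ≥ N₂ := le_trans (le_max_right _ _) hn
  have hd : Metric.hausdorffDist
      (filledJulia (fun z : ℂ => z ^ n + q.eval z)) (Metric.closedBall (0:ℂ) 1) ≤ δ := by
    apply Metric.hausdorffDist_le_of_mem_dist hδ0.le
    · intro x hx
      have hx' : ‖x‖ ≤ 1 + δ := by
        have := hN₂ n hn₂ hx; rwa [Metric.mem_closedBall, dist_zero_right] at this
      by_cases h : ‖x‖ ≤ 1
      · exact ⟨x, by simpa [Metric.mem_closedBall] using h, by simp [hδ0.le]⟩
      · push_neg at h
        have hx0 : ‖x‖ ≠ 0 := by positivity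
        refine ⟨(‖x‖)⁻¹ • x, ?_, ?_⟩
        · rw [Metric.mem_closedBall, dist_zero_right, norm_smul, norm_inv,
            Real.norm_eq_abs, abs_of_nonneg (norm_nonneg _), inv_mul_cancel₀ hx0]
        · rw [dist_eq_norm]
          have : x - (‖x‖)⁻¹ • x = (1 - (‖x‖)⁻¹) • x := by
            rw [sub_smul, one_smul]
          rw [this, norm_smul, Real.norm_eq_abs,
            abs_of_nonneg (by rw [sub_nonneg]; exact inv_le_one_of_one_le₀ h.le)]
          have : (1 - (‖x‖)⁻¹) * ‖x‖ = ‖x‖ - 1 := by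
            rw [sub_mul, one_mul, inv_mul_cancel₀ hx0]
          rw [this]; linarith
    · intro y hy
      rw [Metric.mem_closedBall, dist_zero_right] at hy
      refine ⟨((1 - δ : ℝ)) • y, ?_, ?_⟩
      · apply hN₁ n hn₁
        rw [Metric.mem_closedBall, dist_zero_right, norm_smul, Real.norm_eq_abs,
          abs_of_nonneg (by linarith)]
        nlinarith
      · rw [dist_eq_norm]
        have h5 : y - ((1 - δ : ℝ)) • y = (δ : ℝ) • y := by
          nth_rewrite 1 [← one_smul ℝ y]
          rw [← sub_smul]; norm_num
        rw [h5, norm_smul, Real.norm_eq_abs, abs_of_nonneg hδ0.le]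
        nlinarith
  rw [Real.dist_eq, sub_zero, abs_of_nonneg Metric.hausdorffDist_nonneg]
  linarith
end

section
/- Let q be a polynomial and let K_∞ be defined as K_q ∪ ⋃_{j≥0} S_j (with K_q, S_j as above). For every ε > 0 there is N such that for all n ≥ N, every z_0 with dist(z_0, K_∞) ≥ ε satisfies z_0 ∉ K(f_n), where f_n(z) = z^n + q(z). Equivalently, limsup_n K(f_n) ⊆ K_∞. -/
open Polynomial

/-- `K_q`: points whose entire `q`-orbit stays in the open unit disk. -/
def Kq (q : Polynomial ℂ) : Set ℂ :=
  {z | ∀ k : ℕ, ‖(fun w : ℂ => q.eval w)^[k] z‖ < 1}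

/-- `S_j`: the `q`-orbit stays in the open unit disk until hitting the circle at time `j`. -/
def Sset (q : Polynomial ℂ) (j : ℕ) : Set ℂ :=
  {z | ‖(fun w : ℂ => q.eval w)^[j] z‖ = 1 ∧
    ∀ i < j, ‖(fun w : ℂ => q.eval w)^[i] z‖ < 1}

/-- `K_∞ = K_q ∪ ⋃_{j≥0} S_j`. -/
def Kinf (q : Polynomial ℂ) : Set ℂ := Kq q ∪ ⋃ j : ℕ, Sset q j

section Aux

open Metric Set Filter

lemma poly_bound_s18 (q : Polynomial ℂ) :
    ∃ C : ℝ, 1 ≤ C ∧ ∀ w : ℂ, ‖q.eval w‖ ≤ C * (1 + ‖w‖) ^ q.natDegree := by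
  set d := q.natDegree
  have hs : (0:ℝ) ≤ ∑ i ∈ Finset.range (d + 1), ‖q.coeff i‖ := Finset.sum_nonneg fun i _ => norm_nonneg _
  refine ⟨(∑ i ∈ Finset.range (d + 1), ‖q.coeff i‖) + 1, by linarith, fun w => ?_⟩
  have h1 : (1:ℝ) ≤ 1 + ‖w‖ := by linarith [norm_nonneg w]
  calc ‖q.eval w‖ = ‖∑ i ∈ Finset.range (d + 1), q.coeff i * w ^ i‖ := by
        rw [Polynomial.eval_eq_sum_range]
    _ ≤ ∑ i ∈ Finset.range (d + 1), ‖q.coeff i * w ^ i‖ := norm_sum_le _ _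
    _ ≤ ∑ i ∈ Finset.range (d + 1), ‖q.coeff i‖ * (1 + ‖w‖) ^ d := by
        refine Finset.sum_le_sum fun i hi => ?_
        rw [norm_mul, norm_pow]
        refine mul_le_mul_of_nonneg_left ?_ (norm_nonneg _)
        calc ‖w‖ ^ i ≤ (1 + ‖w‖) ^ i := by
              exact pow_le_pow_left₀ (norm_nonneg w) (by linarith) i
          _ ≤ (1 + ‖w‖) ^ d := pow_le_pow_right₀ h1 (by
              have := Finset.mem_range.1 hi; omega)
    _ = (∑ i ∈ Finset.range (d + 1), ‖q.coeff i‖) * (1 + ‖w‖) ^ d := by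
        rw [Finset.sum_mul]
    _ ≤ ((∑ i ∈ Finset.range (d + 1), ‖q.coeff i‖) + 1) * (1 + ‖w‖) ^ d := by
        have : (0:ℝ) ≤ (1 + ‖w‖) ^ d := by positivity
        nlinarith

lemma pow_diff_bound (x y : ℂ) (hx : ‖x‖ ≤ 1) (hy : ‖y‖ ≤ 1) (i : ℕ) :
    ‖x ^ i - y ^ i‖ ≤ i * ‖x - y‖ := by
  induction i with
  | zero => simp
  | succ i ih =>
    have : x ^ (i+1) - y ^ (i+1) = x ^ i * (x - y) + (x ^ i - y ^ i) * y := by ring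
    rw [this]
    calc ‖x ^ i * (x - y) + (x ^ i - y ^ i) * y‖
        ≤ ‖x ^ i * (x - y)‖ + ‖(x ^ i - y ^ i) * y‖ := norm_add_le _ _
      _ = ‖x‖ ^ i * ‖x - y‖ + ‖x ^ i - y ^ i‖ * ‖y‖ := by rw [norm_mul, norm_mul, norm_pow]
      _ ≤ 1 * ‖x - y‖ + (i * ‖x - y‖) * 1 := by
          have h1 : ‖x‖ ^ i ≤ 1 := pow_le_one₀ (norm_nonneg _) hx
          have h2 : ‖x ^ i - y ^ i‖ * ‖y‖ ≤ (i * ‖x - y‖) * 1 :=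
            mul_le_mul ih hy (norm_nonneg _) (by positivity)
          have h3 : ‖x‖ ^ i * ‖x - y‖ ≤ 1 * ‖x - y‖ :=
            mul_le_mul_of_nonneg_right h1 (norm_nonneg _)
          linarith
      _ = (↑(i + 1)) * ‖x - y‖ := by push_cast; ring

lemma poly_lip (q : Polynomial ℂ) :
    ∃ L : ℝ, 1 ≤ L ∧ ∀ x y : ℂ, ‖x‖ ≤ 1 → ‖y‖ ≤ 1 →
      ‖q.eval x - q.eval y‖ ≤ L * ‖x - y‖ := by
  set d := q.natDegree
  have hs : (0:ℝ) ≤ ∑ i ∈ Finset.range (d + 1), ‖q.coeff i‖ * i := Finset.sum_nonneg fun i _ => by positivity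
  refine ⟨(∑ i ∈ Finset.range (d + 1), ‖q.coeff i‖ * i) + 1, by linarith, fun x y hx hy => ?_⟩
  calc ‖q.eval x - q.eval y‖
      = ‖∑ i ∈ Finset.range (d + 1), q.coeff i * (x ^ i - y ^ i)‖ := by
        rw [Polynomial.eval_eq_sum_range, Polynomial.eval_eq_sum_range, ← Finset.sum_sub_distrib]
        congr 1; refine Finset.sum_congr rfl fun i _ => by ring
    _ ≤ ∑ i ∈ Finset.range (d + 1), ‖q.coeff i * (x ^ i - y ^ i)‖ := norm_sum_le _ _
    _ ≤ ∑ i ∈ Finset.range (d + 1), ‖q.coeff i‖ * i * ‖x - y‖ := by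
        refine Finset.sum_le_sum fun i _ => ?_
        rw [norm_mul, mul_assoc]
        exact mul_le_mul_of_nonneg_left (pow_diff_bound x y hx hy i) (norm_nonneg _)
    _ = (∑ i ∈ Finset.range (d + 1), ‖q.coeff i‖ * i) * ‖x - y‖ := by rw [Finset.sum_mul]
    _ ≤ ((∑ i ∈ Finset.range (d + 1), ‖q.coeff i‖ * i) + 1) * ‖x - y‖ := by
        nlinarith [norm_nonneg (x - y)]


lemma escape_bound (q : Polynomial ℂ) {δ : ℝ} (hδ : 0 < δ) :
    ∃ N : ℕ, ∀ n ≥ N, ∀ w : ℂ, 1 + δ ≤ ‖w‖ → 2 * ‖w‖ ≤ ‖w ^ n + q.eval w‖ := by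
  obtain ⟨C, hC1, hCb⟩ := poly_bound_s18 q
  set d := q.natDegree with hd
  obtain ⟨m, hm⟩ := pow_unbounded_of_one_lt (C * 2 ^ d + 2) (show (1:ℝ) < 1 + δ by linarith)
  refine ⟨m + d + 1, fun n hn w hw => ?_⟩
  have hw1 : 1 ≤ ‖w‖ := by linarith
  have hw0 : (0:ℝ) ≤ ‖w‖ := by linarith
  have hlb : ‖w‖ ^ n - ‖q.eval w‖ ≤ ‖w ^ n + q.eval w‖ := by
    have h := norm_add_le (w ^ n + q.eval w) (-(q.eval w))
    simp only [add_neg_cancel_right, norm_neg] at h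
    rw [norm_pow] at h; linarith
  have hq : ‖q.eval w‖ ≤ C * 2 ^ d * ‖w‖ ^ d := by
    calc ‖q.eval w‖ ≤ C * (1 + ‖w‖) ^ d := hCb w
      _ ≤ C * (2 * ‖w‖) ^ d := by
          refine mul_le_mul_of_nonneg_left (pow_le_pow_left₀ (by linarith) (by linarith) d)
            (by linarith)
      _ = C * 2 ^ d * ‖w‖ ^ d := by rw [mul_pow]; ring
  have e1 : ‖w‖ ^ d ≤ ‖w‖ ^ (d + 1) := pow_le_pow_right₀ hw1 (Nat.le_succ d)
  have e2 : ‖w‖ ≤ ‖w‖ ^ (d + 1) := by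
    simpa using pow_le_pow_right₀ hw1 (show 1 ≤ d + 1 by omega)
  have e3 : (1 + δ) ^ m ≤ ‖w‖ ^ (n - (d + 1)) := by
    calc (1 + δ) ^ m ≤ (1 + δ) ^ (n - (d + 1)) :=
          pow_le_pow_right₀ (by linarith) (by omega)
      _ ≤ ‖w‖ ^ (n - (d + 1)) := pow_le_pow_left₀ (by linarith) hw _
  have e4 : ‖w‖ ^ (d + 1) * ‖w‖ ^ (n - (d + 1)) = ‖w‖ ^ n := by
    rw [← pow_add]; congr 1; omega
  have key : C * 2 ^ d * ‖w‖ ^ d + 2 * ‖w‖ ≤ ‖w‖ ^ n := by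
    have hCd : (0:ℝ) ≤ C * 2 ^ d := by positivity
    have t1 : C * 2 ^ d * ‖w‖ ^ d ≤ C * 2 ^ d * ‖w‖ ^ (d + 1) :=
      mul_le_mul_of_nonneg_left e1 hCd
    have t2 : (C * 2 ^ d + 2) * ‖w‖ ^ (d + 1) ≤ (1 + δ) ^ m * ‖w‖ ^ (d + 1) :=
      mul_le_mul_of_nonneg_right (le_of_lt hm) (by positivity)
    have t3 : (1 + δ) ^ m * ‖w‖ ^ (d + 1) ≤ ‖w‖ ^ (n - (d + 1)) * ‖w‖ ^ (d + 1) :=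
      mul_le_mul_of_nonneg_right e3 (by positivity)
    have t4 : ‖w‖ ^ (n - (d + 1)) * ‖w‖ ^ (d + 1) = ‖w‖ ^ n := by rw [mul_comm]; exact e4
    nlinarith
  linarith

lemma notMem_filledJulia {f : ℂ → ℂ} {δ : ℝ} (hδ : 0 < δ)
    (hf : ∀ w : ℂ, 1 + δ ≤ ‖w‖ → 2 * ‖w‖ ≤ ‖f w‖) {z : ℂ} (k : ℕ)
    (hz : 1 + δ ≤ ‖f^[k] z‖) : z ∉ filledJulia f := by
  have grow : ∀ m : ℕ, 2 ^ m * (1 + δ) ≤ ‖f^[k + m] z‖ := by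
    intro m
    induction m with
    | zero => simpa using hz
    | succ m ih =>
      have h1 : (1:ℝ) ≤ 2 ^ m := one_le_pow₀ (by norm_num)
      have h2 : 1 + δ ≤ ‖f^[k + m] z‖ := le_trans (by nlinarith) ih
      have h3 := hf _ h2
      have : f^[k + (m + 1)] z = f (f^[k + m] z) := by
        rw [show k + (m + 1) = (k + m) + 1 by omega, Function.iterate_succ_apply']
      rw [this]
      calc (2:ℝ) ^ (m + 1) * (1 + δ) = 2 * (2 ^ m * (1 + δ)) := by ring
        _ ≤ 2 * ‖f^[k + m] z‖ := by linarith
        _ ≤ ‖f (f^[k + m] z)‖ := h3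
  rintro ⟨C, hC⟩
  obtain ⟨m, hm⟩ := pow_unbounded_of_one_lt C (show (1:ℝ) < 2 by norm_num)
  have h1 := grow m
  have h2 := hC (k + m)
  have h3 : (0:ℝ) < 2 ^ m := by positivity
  nlinarith


lemma notMem_Kinf_iff (q : Polynomial ℂ) (z : ℂ) :
    z ∉ Kinf q ↔ ∃ k : ℕ, 1 < ‖(fun w : ℂ => q.eval w)^[k] z‖ ∧
      ∀ i < k, ‖(fun w : ℂ => q.eval w)^[i] z‖ < 1 := by
  constructor
  · intro h
    have hK : z ∉ Kq q := fun hz => h (Or.inl hz)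
    have hS : ∀ j, z ∉ Sset q j := fun j hz => h (Or.inr (Set.mem_iUnion.2 ⟨j, hz⟩))
    have hex : ∃ k : ℕ, ¬ ‖(fun w : ℂ => q.eval w)^[k] z‖ < 1 := by
      by_contra h'; push_neg at h'; exact hK h'
    classical
    let k := Nat.find hex
    have hk1 : 1 ≤ ‖(fun w : ℂ => q.eval w)^[k] z‖ := not_lt.1 (Nat.find_spec hex)
    have hk2 : ∀ i < k, ‖(fun w : ℂ => q.eval w)^[i] z‖ < 1 := fun i hi =>
      not_not.1 (Nat.find_min hex hi)
    refine ⟨k, lt_of_le_of_ne hk1 ?_, hk2⟩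
    intro heq
    exact hS k ⟨heq.symm, hk2⟩
  · rintro ⟨k, h1, h2⟩ (hK | hS)
    · exact absurd (hK k) (by linarith)
    · obtain ⟨j, hj1, hj2⟩ := Set.mem_iUnion.1 hS
      rcases lt_trichotomy j k with h | h | h
      · exact absurd hj1 (by have := h2 j h; linarith)
      · subst h; linarith
      · have := hj2 k h; linarith

lemma continuous_iter (q : Polynomial ℂ) (k : ℕ) :
    Continuous fun z : ℂ => ‖(fun w : ℂ => q.eval w)^[k] z‖ :=
  ((q.continuous).iterate k).norm

lemma isClosed_Kinf (q : Polynomial ℂ) : IsClosed (Kinf q) := by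
  rw [← isOpen_compl_iff]
  have : (Kinf q)ᶜ = ⋃ k : ℕ, ({z : ℂ | 1 < ‖(fun w : ℂ => q.eval w)^[k] z‖} ∩
      ⋂ i ∈ Finset.range k, {z : ℂ | ‖(fun w : ℂ => q.eval w)^[i] z‖ < 1}) := by
    ext z
    rw [Set.mem_compl_iff, notMem_Kinf_iff]
    simp only [Set.mem_iUnion, Set.mem_inter_iff, Set.mem_setOf_eq, Set.mem_iInter,
      Finset.mem_range]
  rw [this]
  refine isOpen_iUnion fun k => IsOpen.inter ?_ (isOpen_biInter_finset fun i _ => ?_)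
  · exact isOpen_lt continuous_const (continuous_iter q k)
  · exact isOpen_lt (continuous_iter q i) continuous_const

lemma Kinf_nonempty (q : Polynomial ℂ) : (Kinf q).Nonempty := by
  refine ⟨1, Or.inr (Set.mem_iUnion.2 ⟨0, ?_, ?_⟩)⟩
  · simp
  · omega

lemma uniform_margin (q : Polynomial ℂ) {ε : ℝ} (hε : 0 < ε) :
    ∃ (K : ℕ) (δ : ℝ), 0 < δ ∧ δ ≤ 1 ∧ ∀ z : ℂ, ‖z‖ ≤ 1 →
      ε ≤ infDist z (Kinf q) →
      ∃ k ≤ K, (1 + δ ≤ ‖(fun w : ℂ => q.eval w)^[k] z‖ ∧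
        ∀ i < k, ‖(fun w : ℂ => q.eval w)^[i] z‖ ≤ 1 - δ) := by
  classical
  set A : Set ℂ := Metric.closedBall 0 1 ∩ {z : ℂ | ε ≤ infDist z (Kinf q)} with hA
  have hAc : IsCompact A := by
    refine (isCompact_closedBall 0 1).inter_right ?_
    exact isClosed_le continuous_const (continuous_infDist_pt _)
  set O : ℕ × ℕ → Set ℂ := fun p =>
    {z : ℂ | 1 + 1 / (p.2 + 1 : ℝ) < ‖(fun w : ℂ => q.eval w)^[p.1] z‖} ∩
    ⋂ i ∈ Finset.range p.1, {z : ℂ | ‖(fun w : ℂ => q.eval w)^[i] z‖ < 1 - 1 / (p.2 + 1 : ℝ)}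
    with hO
  have hOopen : ∀ p, IsOpen (O p) := fun p =>
    IsOpen.inter (isOpen_lt continuous_const (continuous_iter q p.1))
      (isOpen_biInter_finset fun i _ => isOpen_lt (continuous_iter q i) continuous_const)
  have hcover : A ⊆ ⋃ p : ℕ × ℕ, O p := by
    intro z hz
    have hzK : z ∉ Kinf q := by
      intro hmem
      have := hz.2
      rw [Set.mem_setOf_eq, infDist_zero_of_mem hmem] at this
      linarith
    obtain ⟨k, h1, h2⟩ := (notMem_Kinf_iff q z).1 hzK
    set S : Finset ℝ := insert (‖(fun w : ℂ => q.eval w)^[k] z‖ - 1)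
      ((Finset.range k).image fun i => 1 - ‖(fun w : ℂ => q.eval w)^[i] z‖) with hS
    have hSne : S.Nonempty := ⟨_, Finset.mem_insert_self _ _⟩
    have hSpos : ∀ x ∈ S, 0 < x := by
      intro x hx
      rcases Finset.mem_insert.1 hx with h | h
      · subst h; linarith
      · obtain ⟨i, hi, rfl⟩ := Finset.mem_image.1 h
        have := h2 i (Finset.mem_range.1 hi); linarith
    have hmin : 0 < S.min' hSne := hSpos _ (S.min'_mem hSne)
    obtain ⟨m, hm⟩ := exists_nat_one_div_lt hmin
    refine Set.mem_iUnion.2 ⟨(k, m), ?_, ?_⟩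
    · have : S.min' hSne ≤ ‖(fun w : ℂ => q.eval w)^[k] z‖ - 1 :=
        Finset.min'_le _ _ (Finset.mem_insert_self _ _)
      simp only [Set.mem_setOf_eq]
      push_cast
      linarith
    · refine Set.mem_iInter.2 fun i => Set.mem_iInter.2 fun hi => ?_
      have hik : i < k := Finset.mem_range.1 hi
      have : S.min' hSne ≤ 1 - ‖(fun w : ℂ => q.eval w)^[i] z‖ :=
        Finset.min'_le _ _ (Finset.mem_insert.2 (Or.inr (Finset.mem_image.2 ⟨i, hi, rfl⟩)))
      simp only [Set.mem_setOf_eq]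
      push_cast
      linarith
  obtain ⟨t, ht⟩ := hAc.elim_finite_subcover O hOopen hcover
  set K := t.sup Prod.fst with hK
  set M := t.sup Prod.snd with hM
  have hδpos : (0:ℝ) < 1 / (M + 1) := by positivity
  have hδle : (1:ℝ) / (M + 1) ≤ 1 := by
    rw [div_le_one (by positivity)]
    linarith [Nat.cast_nonneg (α := ℝ) M]
  refine ⟨K, 1 / (M + 1 : ℝ), hδpos, hδle, fun z hz1 hz2 => ?_⟩
  have hzA : z ∈ A := ⟨by simpa [Metric.mem_closedBall, dist_eq_norm] using hz1, hz2⟩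
  obtain ⟨p, hpt, hzO⟩ := Set.mem_iUnion₂.1 (ht hzA)
  have hk : p.1 ≤ K := Finset.le_sup (f := Prod.fst) hpt
  have hmM : p.2 ≤ M := Finset.le_sup (f := Prod.snd) hpt
  have hδm : (1:ℝ) / (M + 1) ≤ 1 / (p.2 + 1) := by
    apply one_div_le_one_div_of_le (by positivity)
    have : (p.2 : ℝ) ≤ M := Nat.cast_le.2 hmM
    linarith
  obtain ⟨hzO1, hzO2⟩ := hzO
  refine ⟨p.1, hk, ?_, fun i hi => ?_⟩
  · simp only [Set.mem_setOf_eq] at hzO1; linarith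
  · have := Set.mem_iInter.1 (Set.mem_iInter.1 hzO2 i) (Finset.mem_range.2 hi)
    simp only [Set.mem_setOf_eq] at this
    linarith

lemma tracking (q : Polynomial ℂ) {δ L : ℝ} (hδ0 : 0 < δ) (hδ1 : δ ≤ 1) (hL : 1 ≤ L)
    (hlip : ∀ x y : ℂ, ‖x‖ ≤ 1 → ‖y‖ ≤ 1 → ‖q.eval x - q.eval y‖ ≤ L * ‖x - y‖)
    (K : ℕ) :
    ∃ N : ℕ, ∀ n ≥ N, ∀ z : ℂ, ∀ k ≤ K,
      1 + δ ≤ ‖(fun w : ℂ => q.eval w)^[k] z‖ →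
      (∀ i < k, ‖(fun w : ℂ => q.eval w)^[i] z‖ ≤ 1 - δ) →
      1 + δ / 2 ≤ ‖(fun w : ℂ => w ^ n + q.eval w)^[k] z‖ := by
  have hb0 : (0:ℝ) ≤ 1 - δ / 2 := by linarith
  have hb1 : 1 - δ / 2 < 1 := by linarith
  set A : ℝ := (K : ℝ) * L ^ K + 1 with hA
  have hA1 : (1:ℝ) ≤ A := by
    have : (0:ℝ) ≤ (K : ℝ) * L ^ K := by positivity
    linarith
  obtain ⟨N, hN⟩ := exists_pow_lt_of_lt_one (show (0:ℝ) < δ / (2 * A) by positivity) hb1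
  refine ⟨N, fun n hn z k hkK hbig hsmall => ?_⟩
  set E : ℝ := (1 - δ / 2) ^ n with hE
  have hE0 : (0:ℝ) ≤ E := by positivity
  have hEN : E ≤ (1 - δ / 2) ^ N := pow_le_pow_of_le_one hb0 (by linarith) hn
  have hEA : E * ((K : ℝ) * L ^ K) ≤ δ / 2 := by
    have h1 : E < δ / (2 * A) := lt_of_le_of_lt hEN hN
    have h2 : E * A < δ / 2 := by
      rw [div_mul_eq_div_div] at h1
      have := (lt_div_iff₀ (by linarith : (0:ℝ) < A)).1 h1
      linarith [this]
    nlinarith [hE0]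
  set Q : ℂ → ℂ := fun w => q.eval w with hQ
  set f : ℂ → ℂ := fun w => w ^ n + q.eval w with hf
  have key : ∀ m, m ≤ k → ‖f^[m] z - Q^[m] z‖ ≤ E * m * L ^ m := by
    intro m
    induction m with
    | zero => simp
    | succ m ih =>
      intro hm1
      have hmk : m < k := by omega
      have herr := ih (by omega)
      have hmLK : (m : ℝ) * L ^ m ≤ (K : ℝ) * L ^ K := by
        have h1 : (m : ℝ) ≤ (K : ℝ) := Nat.cast_le.2 (by omega)
        have h2 : L ^ m ≤ L ^ K := pow_le_pow_right₀ hL (by omega)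
        have h3 : (0:ℝ) ≤ (m:ℝ) := Nat.cast_nonneg m
        nlinarith [pow_nonneg (by linarith : (0:ℝ) ≤ L) m]
      have herr2 : ‖f^[m] z - Q^[m] z‖ ≤ δ / 2 := by
        refine herr.trans (le_trans ?_ hEA)
        rw [mul_assoc]
        exact mul_le_mul_of_nonneg_left hmLK hE0
      have hu : ‖Q^[m] z‖ ≤ 1 - δ := hsmall m hmk
      have hwm : ‖f^[m] z‖ ≤ 1 - δ / 2 := by
        have := norm_sub_norm_le (f^[m] z) (Q^[m] z)
        linarith
      rw [Function.iterate_succ_apply', Function.iterate_succ_apply']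
      have hstep : f (f^[m] z) - Q (Q^[m] z)
          = (f^[m] z) ^ n + (q.eval (f^[m] z) - q.eval (Q^[m] z)) := by
        simp only [hf, hQ]; ring
      rw [hstep]
      have hlipb : ‖q.eval (f^[m] z) - q.eval (Q^[m] z)‖ ≤ L * ‖f^[m] z - Q^[m] z‖ :=
        hlip _ _ (by linarith) (by linarith)
      have hpow : ‖(f^[m] z) ^ n‖ ≤ E := by
        rw [norm_pow]
        exact pow_le_pow_left₀ (norm_nonneg _) hwm n
      calc ‖(f^[m] z) ^ n + (q.eval (f^[m] z) - q.eval (Q^[m] z))‖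
          ≤ ‖(f^[m] z) ^ n‖ + ‖q.eval (f^[m] z) - q.eval (Q^[m] z)‖ := norm_add_le _ _
        _ ≤ E + L * (E * m * L ^ m) := by
            have := mul_le_mul_of_nonneg_left herr (by linarith : (0:ℝ) ≤ L)
            linarith
        _ ≤ E * (↑(m + 1)) * L ^ (m + 1) := by
            have h1 : (1:ℝ) ≤ L ^ (m + 1) := one_le_pow₀ hL
            have h2 : E ≤ E * L ^ (m + 1) := le_mul_of_one_le_right hE0 h1
            have h3 : L * (E * m * L ^ m) = E * m * L ^ (m + 1) := by ring
            have h4 : E * ((m + 1 : ℕ) : ℝ) * L ^ (m + 1)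
                = E * m * L ^ (m + 1) + E * L ^ (m + 1) := by push_cast; ring
            rw [h4, h3]
            linarith
  have hfin := key k le_rfl
  have hfin2 : ‖f^[k] z - Q^[k] z‖ ≤ δ / 2 := by
    refine hfin.trans (le_trans ?_ hEA)
    have hmLK : (k : ℝ) * L ^ k ≤ (K : ℝ) * L ^ K := by
      have h1 : (k : ℝ) ≤ (K : ℝ) := Nat.cast_le.2 hkK
      have h2 : L ^ k ≤ L ^ K := pow_le_pow_right₀ hL hkK
      nlinarith [pow_nonneg (by linarith : (0:ℝ) ≤ L) k, Nat.cast_nonneg (α := ℝ) k]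
    rw [mul_assoc]
    exact mul_le_mul_of_nonneg_left hmLK hE0
  have := norm_sub_norm_le (Q^[k] z) (f^[k] z)
  have hsym : ‖Q^[k] z - f^[k] z‖ = ‖f^[k] z - Q^[k] z‖ := norm_sub_rev _ _
  linarith

lemma exists_fixed (q : Polynomial ℂ) (n : ℕ) (hn : q.natDegree + 2 ≤ n) :
    ∃ w : ℂ, w ^ n + q.eval w = w := by
  set p : Polynomial ℂ := X ^ n + (q - X) with hp
  have hlt : (q - X).degree < ((X : ℂ[X]) ^ n).degree := by
    rw [degree_X_pow]
    refine lt_of_le_of_lt (degree_sub_le q X) (max_lt ?_ ?_)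
    · refine lt_of_le_of_lt (degree_le_natDegree) ?_
      exact_mod_cast Nat.lt_of_lt_of_le (by omega) (le_refl n)
    · rw [degree_X]
      exact_mod_cast show 1 < n by omega
  have hdeg : 0 < p.degree := by
    rw [hp, degree_add_eq_left_of_degree_lt hlt, degree_X_pow]
    exact_mod_cast show 0 < n by omega
  obtain ⟨w, hw⟩ := Complex.exists_root hdeg
  refine ⟨w, ?_⟩
  have : w ^ n + (q.eval w - w) = 0 := by
    simpa [hp, IsRoot, eval_add, eval_pow, eval_sub, eval_X] using hw
  linear_combination this

end Aux

open Metric Set Filter in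
/-- points a definite distance from `K_∞` are not in `K(f_n)` for
large `n`; equivalently, `limsup_n K(f_n) ⊆ K_∞`. -/
theorem limsup_filledJulia_subset_Kinf (q : Polynomial ℂ) :
    (∀ ε > (0 : ℝ), ∃ N : ℕ, ∀ n ≥ N, ∀ z₀ : ℂ,
      ε ≤ Metric.infDist z₀ (Kinf q) →
        z₀ ∉ filledJulia (fun z : ℂ => z ^ n + q.eval z)) ∧
    {z : ℂ | Filter.liminf
        (fun n : ℕ => Metric.infDist z (filledJulia (fun w : ℂ => w ^ n + q.eval w)))
        Filter.atTop = 0} ⊆ Kinf q := by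
  classical
  have part1 : ∀ ε > (0 : ℝ), ∃ N : ℕ, ∀ n ≥ N, ∀ z₀ : ℂ,
      ε ≤ Metric.infDist z₀ (Kinf q) →
        z₀ ∉ filledJulia (fun z : ℂ => z ^ n + q.eval z) := by
    intro ε hε
    obtain ⟨K, δ, hδ0, hδ1, hmargin⟩ := uniform_margin q hε
    obtain ⟨L, hL1, hlip⟩ := poly_lip q
    have hδ₀pos : 0 < min ε (δ / 2) := lt_min hε (by linarith)
    obtain ⟨N₁, hN₁⟩ := escape_bound q hδ₀pos
    obtain ⟨N₂, hN₂⟩ := tracking q hδ0 hδ1 hL1 hlip K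
    refine ⟨max N₁ N₂, fun n hn z₀ hdist => ?_⟩
    have hesc : ∀ w : ℂ, 1 + min ε (δ / 2) ≤ ‖w‖ →
        2 * ‖w‖ ≤ ‖(fun z : ℂ => z ^ n + q.eval z) w‖ :=
      fun w hw => hN₁ n (le_trans (le_max_left _ _) hn) w hw
    by_cases hz : ‖z₀‖ ≤ 1
    · obtain ⟨k, hkK, hk1, hk2⟩ := hmargin z₀ hz hdist
      have htr := hN₂ n (le_trans (le_max_right _ _) hn) z₀ k hkK hk1 hk2
      refine notMem_filledJulia hδ₀pos hesc k ?_
      have hmin : min ε (δ / 2) ≤ δ / 2 := min_le_right _ _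
      linarith
    · push_neg at hz
      have hz0 : ‖z₀‖ ≠ 0 := by positivity
      set w : ℂ := (↑(‖z₀‖⁻¹) : ℂ) * z₀ with hwdef
      have hwnorm : ‖w‖ = 1 := by
        rw [hwdef, norm_mul, Complex.norm_real, Real.norm_eq_abs,
          abs_of_pos (by positivity : (0:ℝ) < ‖z₀‖⁻¹)]
        exact inv_mul_cancel₀ hz0
      have hwK : w ∈ Kinf q :=
        Or.inr (Set.mem_iUnion.2 ⟨0, ⟨by simpa using hwnorm, fun i hi => by omega⟩⟩)
      have hdistw : dist z₀ w = ‖z₀‖ - 1 := by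
        rw [dist_eq_norm]
        have hzw : z₀ - w = (↑(1 - ‖z₀‖⁻¹) : ℂ) * z₀ := by
          rw [hwdef]; push_cast; ring
        rw [hzw, norm_mul, Complex.norm_real, Real.norm_eq_abs, abs_of_nonneg
          (by rw [sub_nonneg, inv_le_one_iff₀]; right; linarith : (0:ℝ) ≤ 1 - ‖z₀‖⁻¹)]
        rw [sub_mul, one_mul, inv_mul_cancel₀ hz0]
      have h1 : ε ≤ ‖z₀‖ - 1 :=
        le_trans hdist (by rw [← hdistw]; exact infDist_le_dist_of_mem hwK)
      refine notMem_filledJulia hδ₀pos hesc 0 ?_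
      simp only [Function.iterate_zero, id_eq]
      have hmin : min ε (δ / 2) ≤ ε := min_le_left _ _
      linarith
  refine ⟨part1, fun z hz => ?_⟩
  by_contra hzK
  have hcl := isClosed_Kinf q
  have hne := Kinf_nonempty q
  have hpos : 0 < infDist z (Kinf q) := (hcl.notMem_iff_infDist_pos hne).1 hzK
  set ε' := infDist z (Kinf q) with hε'
  obtain ⟨N, hN⟩ := part1 (ε' / 2) (by linarith)
  obtain ⟨N₁, hN₁⟩ := escape_bound q (show (0:ℝ) < 1 by norm_num)
  set N' := max (max N N₁) (q.natDegree + 2) with hN'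
  have hev : ∀ n, N' ≤ n →
      ε' / 2 ≤ infDist z (filledJulia (fun w : ℂ => w ^ n + q.eval w)) ∧
      infDist z (filledJulia (fun w : ℂ => w ^ n + q.eval w)) ≤ ‖z‖ + 2 := by
    intro n hn
    have hnN : N ≤ n := le_trans (le_trans (le_max_left _ _) (le_max_left _ _)) hn
    have hnN₁ : N₁ ≤ n := le_trans (le_trans (le_max_right _ _) (le_max_left _ _)) hn
    have hnd : q.natDegree + 2 ≤ n := le_trans (le_max_right _ _) hn
    obtain ⟨w, hwfix⟩ := exists_fixed q n hnd
    have horbit : ∀ m : ℕ, (fun u : ℂ => u ^ n + q.eval u)^[m] w = w := by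
      intro m
      induction m with
      | zero => simp
      | succ m ih => rw [Function.iterate_succ_apply', ih]; exact hwfix
    have hwJ : w ∈ filledJulia (fun w : ℂ => w ^ n + q.eval w) :=
      ⟨‖w‖, fun m => by rw [horbit m]⟩
    have hwb : ‖w‖ ≤ 2 := by
      by_contra hcon
      push_neg at hcon
      have h2 := hN₁ n hnN₁ w (by linarith)
      rw [hwfix] at h2
      linarith
    constructor
    · by_contra hcon
      push_neg at hcon
      obtain ⟨y, hy, hylt⟩ := (infDist_lt_iff ⟨w, hwJ⟩).1 hcon
      have hy2 : infDist y (Kinf q) < ε' / 2 := by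
        by_contra hcon2
        push_neg at hcon2
        exact (hN n hnN y hcon2) hy
      have tri : ε' ≤ infDist y (Kinf q) + dist z y := infDist_le_infDist_add_dist
      linarith
    · refine le_trans (infDist_le_dist_of_mem hwJ) ?_
      rw [dist_eq_norm]
      calc ‖z - w‖ ≤ ‖z‖ + ‖w‖ := norm_sub_le _ _
        _ ≤ ‖z‖ + 2 := by linarith
  have hz0 : Filter.liminf
      (fun n : ℕ => infDist z (filledJulia (fun w : ℂ => w ^ n + q.eval w)))
      Filter.atTop = 0 := hz
  have hco : Filter.IsCoboundedUnder (· ≥ ·) Filter.atTop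
      (fun n : ℕ => infDist z (filledJulia (fun w : ℂ => w ^ n + q.eval w))) :=
    Filter.isCoboundedUnder_ge_of_eventually_le Filter.atTop
      (Filter.eventually_atTop.2 ⟨N', fun n hn => (hev n hn).2⟩)
  have hfreq : ∃ᶠ n in Filter.atTop,
      infDist z (filledJulia (fun w : ℂ => w ^ n + q.eval w)) < ε' / 2 :=
    Filter.frequently_lt_of_liminf_lt hco (by rw [hz0]; linarith)
  obtain ⟨n, hn1, hn2⟩ := (hfreq.and_eventually
    (Filter.eventually_atTop.2 ⟨N', fun n hn => (hev n hn).1⟩)).exists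
  linarith
end
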